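/- The 2-form dγ, where γ is the left-invariant 1-form θ = dz - 2∑_i(y_i dx_i - x_i dy_i) on the Heisenberg group, equals 4∑_{a=1}^m (dx_{2a-1} ∧ dy_{2a-1} + dx_{2a} ∧ dy_{2a}), and this 2-form is of type (1,1) with respect to each of the complex structures I_1, I_2, I_3, i.e. dγ(I_k X, I_k Y) = dγ(X, Y) for all vectors X, Y and k = 1, 2, 3. -/
import Mathlib


/-- Points of `ℝ^{4m+4}` with coordinates `(x, y, z, e)`, where
`x (a, 0) = x_{2a-1}`, `x (a, 1) = x_{2a}` and similarly for `y`. -/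
abbrev Pt (m : ℕ) := (Fin m × Fin 2 → ℝ) × (Fin m × Fin 2 → ℝ) × ℝ × (Fin 3 → ℝ)

/-- The coordinate 1-form `dx_i`. -/
def dxL (m : ℕ) (i : Fin m × Fin 2) : Pt m →ₗ[ℝ] ℝ where
  toFun p := p.1 i
  map_add' _ _ := rfl
  map_smul' _ _ := rfl

/-- The coordinate 1-form `dy_i`. -/
def dyL (m : ℕ) (i : Fin m × Fin 2) : Pt m →ₗ[ℝ] ℝ where
  toFun p := p.2.1 i
  map_add' _ _ := rfl
  map_smul' _ _ := rfl

/-- The coordinate 1-form `dz`. -/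
def dzL (m : ℕ) : Pt m →ₗ[ℝ] ℝ where
  toFun p := p.2.2.1
  map_add' _ _ := rfl
  map_smul' _ _ := rfl

/-- The left-invariant 1-form `γ = dz - 2∑ᵢ(yᵢ dxᵢ - xᵢ dyᵢ)` at `p`. -/
noncomputable def gammaL (m : ℕ) (p : Pt m) : Pt m →ₗ[ℝ] ℝ :=
  dzL m - (2 : ℝ) • ∑ i : Fin m × Fin 2, (p.2.1 i • dxL m i - p.1 i • dyL m i)

/-- The exterior derivative of `γ`, evaluated on constant vector fields:
`dγ_p(u,v) = D_u(γ(v))(p) - D_v(γ(u))(p)`. -/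
noncomputable def dGamma (m : ℕ) (p u v : Pt m) : ℝ :=
  fderiv ℝ (fun q => gammaL m q v) p u - fderiv ℝ (fun q => gammaL m q u) p v

/-- The invariant frame fields `X_i = ∂/∂xᵢ + 2yᵢ ∂/∂z`,
`Y_i = ∂/∂yᵢ - 2xᵢ ∂/∂z`, `Z = ∂/∂z`, `E_k = ∂/∂e_k` at `p`. -/
def Xf (m : ℕ) (i : Fin m × Fin 2) (p : Pt m) : Pt m :=
  (Pi.single i 1, 0, 2 * p.2.1 i, 0)

def Yf (m : ℕ) (i : Fin m × Fin 2) (p : Pt m) : Pt m :=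
  (0, Pi.single i 1, -(2 * p.1 i), 0)

def Zf (m : ℕ) : Pt m := (0, 0, 1, 0)

def Ef (m : ℕ) (k : Fin 3) : Pt m := (0, 0, 0, Pi.single k 1)

/-- `J` acts as `I₁` on the invariant frame at `p`. -/
def I1rules (m : ℕ) (p : Pt m) (J : Pt m →ₗ[ℝ] Pt m) : Prop :=
  (∀ a : Fin m, J (Xf m (a, 0) p) = Xf m (a, 1) p) ∧
  (∀ a : Fin m, J (Xf m (a, 1) p) = -Xf m (a, 0) p) ∧
  (∀ a : Fin m, J (Yf m (a, 0) p) = Yf m (a, 1) p) ∧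
  (∀ a : Fin m, J (Yf m (a, 1) p) = -Yf m (a, 0) p) ∧
  J (Zf m) = Ef m 0 ∧ J (Ef m 0) = -Zf m ∧ J (Ef m 1) = Ef m 2 ∧
  J (Ef m 2) = -Ef m 1

/-- `J` acts as `I₂` on the invariant frame at `p`. -/
def I2rules (m : ℕ) (p : Pt m) (J : Pt m →ₗ[ℝ] Pt m) : Prop :=
  (∀ a : Fin m, J (Xf m (a, 0) p) = Yf m (a, 0) p) ∧
  (∀ a : Fin m, J (Xf m (a, 1) p) = -Yf m (a, 1) p) ∧
  (∀ a : Fin m, J (Yf m (a, 0) p) = -Xf m (a, 0) p) ∧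
  (∀ a : Fin m, J (Yf m (a, 1) p) = Xf m (a, 1) p) ∧
  J (Zf m) = Ef m 1 ∧ J (Ef m 0) = -Ef m 2 ∧ J (Ef m 1) = -Zf m ∧
  J (Ef m 2) = Ef m 0

/-- `J` acts as `I₃` on the invariant frame at `p`. -/
def I3rules (m : ℕ) (p : Pt m) (J : Pt m →ₗ[ℝ] Pt m) : Prop :=
  (∀ a : Fin m, J (Xf m (a, 0) p) = Yf m (a, 1) p) ∧
  (∀ a : Fin m, J (Xf m (a, 1) p) = Yf m (a, 0) p) ∧
  (∀ a : Fin m, J (Yf m (a, 0) p) = -Xf m (a, 1) p) ∧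
  (∀ a : Fin m, J (Yf m (a, 1) p) = -Xf m (a, 0) p) ∧
  J (Zf m) = Ef m 2 ∧ J (Ef m 0) = Ef m 1 ∧ J (Ef m 1) = -Ef m 0 ∧
  J (Ef m 2) = -Zf m


noncomputable def Lmap (m : ℕ) (v : Pt m) : Pt m →ₗ[ℝ] ℝ :=
  (-2 : ℝ) • ∑ i : Fin m × Fin 2, (v.1 i • dyL m i - v.2.1 i • dxL m i)

lemma Lmap_apply (m : ℕ) (v q : Pt m) :
    Lmap m v q = -2 * ∑ i : Fin m × Fin 2, (v.1 i * q.2.1 i - v.2.1 i * q.1 i) := by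
  simp [Lmap, dxL, dyL, LinearMap.sum_apply]

lemma gammaL_eq (m : ℕ) (q v : Pt m) : gammaL m q v = dzL m v + Lmap m v q := by
  simp only [gammaL, Lmap, LinearMap.sub_apply, LinearMap.smul_apply, LinearMap.sum_apply,
    smul_eq_mul, dxL, dyL, dzL, LinearMap.coe_mk, AddHom.coe_mk]
  rw [sub_eq_add_neg]
  congr 1
  rw [neg_mul_eq_neg_mul]
  congr 1
  exact Finset.sum_congr rfl fun i _ => by ring

lemma fderiv_gamma (m : ℕ) (p v u : Pt m) :
    fderiv ℝ (fun q => gammaL m q v) p u = Lmap m v u := by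
  have h : (fun q => gammaL m q v)
      = fun q => dzL m v + (LinearMap.toContinuousLinearMap (Lmap m v)) q := by
    funext q
    simp [gammaL_eq]
  rw [h, fderiv_const_add, ContinuousLinearMap.fderiv]
  simp

lemma dGamma_eq (m : ℕ) (p u v : Pt m) :
    dGamma m p u v = 4 * ∑ i : Fin m × Fin 2, (u.1 i * v.2.1 i - v.1 i * u.2.1 i) := by
  rw [dGamma, fderiv_gamma, fderiv_gamma, Lmap_apply, Lmap_apply]
  rw [Finset.mul_sum, Finset.mul_sum, Finset.mul_sum, ← Finset.sum_sub_distrib]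
  exact Finset.sum_congr rfl fun i _ => by ring

lemma decomp (m : ℕ) (p u : Pt m) :
    u = ∑ i : Fin m × Fin 2, u.1 i • Xf m i p + ∑ i : Fin m × Fin 2, u.2.1 i • Yf m i p
      + (u.2.2.1 - 2 * ∑ i : Fin m × Fin 2, p.2.1 i * u.1 i
          + 2 * ∑ i : Fin m × Fin 2, p.1 i * u.2.1 i) • Zf m
      + ∑ k : Fin 3, u.2.2.2 k • Ef m k := by
  obtain ⟨x, y, z, e⟩ := u
  refine Prod.ext ?_ (Prod.ext ?_ (Prod.ext ?_ ?_))
  · simp [Xf, Yf, Zf, Ef, Prod.fst_sum, Prod.snd_sum]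
    funext j
    simp [Finset.sum_apply, Pi.single_apply, Finset.sum_ite_eq]
  · simp [Xf, Yf, Zf, Ef, Prod.fst_sum, Prod.snd_sum]
    funext j
    simp [Finset.sum_apply, Pi.single_apply, Finset.sum_ite_eq]
  · have h1 : ∑ i : Fin m × Fin 2, x i * (2 * p.2.1 i) = 2 * ∑ i : Fin m × Fin 2, p.2.1 i * x i := by
      rw [Finset.mul_sum]; exact Finset.sum_congr rfl fun i _ => by ring
    have h2 : ∑ i : Fin m × Fin 2, y i * -(2 * p.1 i) = -(2 * ∑ i : Fin m × Fin 2, p.1 i * y i) := by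
      rw [Finset.mul_sum, ← Finset.sum_neg_distrib]
      exact Finset.sum_congr rfl fun i _ => by ring
    simp only [Xf, Yf, Zf, Ef, Prod.fst_add, Prod.snd_add, Prod.fst_sum, Prod.snd_sum,
      Prod.smul_mk, smul_eq_mul, smul_zero, mul_zero, mul_one]
    rw [h1, h2]
    ring
  · simp [Xf, Yf, Zf, Ef, Prod.fst_sum, Prod.snd_sum]
    funext j
    simp [Finset.sum_apply, Pi.single_apply, Finset.sum_ite_eq]

lemma J_apply (m : ℕ) (p : Pt m) (J : Pt m →ₗ[ℝ] Pt m) (u : Pt m) :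
    J u = ∑ i : Fin m × Fin 2, u.1 i • J (Xf m i p)
      + ∑ i : Fin m × Fin 2, u.2.1 i • J (Yf m i p)
      + (u.2.2.1 - 2 * ∑ i : Fin m × Fin 2, p.2.1 i * u.1 i
          + 2 * ∑ i : Fin m × Fin 2, p.1 i * u.2.1 i) • J (Zf m)
      + ∑ k : Fin 3, u.2.2.2 k • J (Ef m k) := by
  conv_lhs => rw [decomp m p u]
  simp [map_add, map_sum, map_smul]

lemma I1_comp (m : ℕ) (p : Pt m) (J : Pt m →ₗ[ℝ] Pt m) (h : I1rules m p J) (u : Pt m)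
    (a : Fin m) :
    (J u).1 (a, 0) = -u.1 (a, 1) ∧ (J u).1 (a, 1) = u.1 (a, 0) ∧
    (J u).2.1 (a, 0) = -u.2.1 (a, 1) ∧ (J u).2.1 (a, 1) = u.2.1 (a, 0) := by
  obtain ⟨hX0, hX1, hY0, hY1, hZ, hE0, hE1, hE2⟩ := h
  rw [J_apply m p J u]
  simp only [Fintype.sum_prod_type, Fin.sum_univ_two, Fin.sum_univ_three,
    hX0, hX1, hY0, hY1, hZ, hE0, hE1, hE2]
  refine ⟨?_, ?_, ?_, ?_⟩ <;>
    simp [Xf, Yf, Zf, Ef, Prod.fst_sum, Prod.snd_sum, Finset.sum_apply, Pi.single_apply,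
      Prod.mk.injEq, Finset.sum_ite_eq, show ((0:Fin 2) = 1) ↔ False by decide,
      show ((1:Fin 2) = 0) ↔ False by decide]

lemma I2_comp (m : ℕ) (p : Pt m) (J : Pt m →ₗ[ℝ] Pt m) (h : I2rules m p J) (u : Pt m)
    (a : Fin m) :
    (J u).1 (a, 0) = -u.2.1 (a, 0) ∧ (J u).1 (a, 1) = u.2.1 (a, 1) ∧
    (J u).2.1 (a, 0) = u.1 (a, 0) ∧ (J u).2.1 (a, 1) = -u.1 (a, 1) := by
  obtain ⟨hX0, hX1, hY0, hY1, hZ, hE0, hE1, hE2⟩ := h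
  rw [J_apply m p J u]
  simp only [Fintype.sum_prod_type, Fin.sum_univ_two, Fin.sum_univ_three,
    hX0, hX1, hY0, hY1, hZ, hE0, hE1, hE2]
  refine ⟨?_, ?_, ?_, ?_⟩ <;>
    simp [Xf, Yf, Zf, Ef, Prod.fst_sum, Prod.snd_sum, Finset.sum_apply, Pi.single_apply,
      Prod.mk.injEq, Finset.sum_ite_eq, show ((0:Fin 2) = 1) ↔ False by decide,
      show ((1:Fin 2) = 0) ↔ False by decide]

lemma I3_comp (m : ℕ) (p : Pt m) (J : Pt m →ₗ[ℝ] Pt m) (h : I3rules m p J) (u : Pt m)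
    (a : Fin m) :
    (J u).1 (a, 0) = -u.2.1 (a, 1) ∧ (J u).1 (a, 1) = -u.2.1 (a, 0) ∧
    (J u).2.1 (a, 0) = u.1 (a, 1) ∧ (J u).2.1 (a, 1) = u.1 (a, 0) := by
  obtain ⟨hX0, hX1, hY0, hY1, hZ, hE0, hE1, hE2⟩ := h
  rw [J_apply m p J u]
  simp only [Fintype.sum_prod_type, Fin.sum_univ_two, Fin.sum_univ_three,
    hX0, hX1, hY0, hY1, hZ, hE0, hE1, hE2]
  refine ⟨?_, ?_, ?_, ?_⟩ <;>
    simp [Xf, Yf, Zf, Ef, Prod.fst_sum, Prod.snd_sum, Finset.sum_apply, Pi.single_apply,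
      Prod.mk.injEq, Finset.sum_ite_eq, show ((0:Fin 2) = 1) ↔ False by decide,
      show ((1:Fin 2) = 0) ↔ False by decide]

/-- `dγ = 4 ∑ₐ (dx_{2a-1} ∧ dy_{2a-1} + dx_{2a} ∧ dy_{2a})`, and this 2-form is
of type (1,1) with respect to each of `I₁, I₂, I₃`, i.e.
`dγ(I_k u, I_k v) = dγ(u, v)`. -/
theorem dgamma_formula_and_type_one_one (m : ℕ) :
    (∀ p u v : Pt m, dGamma m p u v =
      4 * ∑ i : Fin m × Fin 2,
        (dxL m i u * dyL m i v - dxL m i v * dyL m i u)) ∧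
    (∀ (p : Pt m) (J : Pt m →ₗ[ℝ] Pt m),
      (I1rules m p J ∨ I2rules m p J ∨ I3rules m p J) →
      ∀ u v : Pt m, dGamma m p (J u) (J v) = dGamma m p u v) := by
  constructor
  · intro p u v
    rw [dGamma_eq]
    simp [dxL, dyL]
  · intro p J h u v
    rw [dGamma_eq, dGamma_eq]
    congr 1
    rw [Fintype.sum_prod_type, Fintype.sum_prod_type]
    simp only [Fin.sum_univ_two]
    refine Finset.sum_congr rfl fun a _ => ?_
    rcases h with h | h | h
    · obtain ⟨hu1, hu2, hu3, hu4⟩ := I1_comp m p J h u a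
      obtain ⟨hv1, hv2, hv3, hv4⟩ := I1_comp m p J h v a
      rw [hu1, hu2, hu3, hu4, hv1, hv2, hv3, hv4]; ring
    · obtain ⟨hu1, hu2, hu3, hu4⟩ := I2_comp m p J h u a
      obtain ⟨hv1, hv2, hv3, hv4⟩ := I2_comp m p J h v a
      rw [hu1, hu2, hu3, hu4, hv1, hv2, hv3, hv4]; ring
    · obtain ⟨hu1, hu2, hu3, hu4⟩ := I3_comp m p J h u a
      obtain ⟨hv1, hv2, hv3, hv4⟩ := I3_comp m p J h v a
      rw [hu1, hu2, hu3, hu4, hv1, hv2, hv3, hv4]; ring
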